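/- Let f(x) = ‖x‖₁ + (μ/2)‖Ax − c‖₂² with AA' = I, μ > 0, c ∈ ℝⁿ. Then x* minimizes f if and only if x* = S_{1/μ}(x* + A'(c − Ax*)). -/

import Mathlib

/-!
`x*` minimises `f` exactly when, in every coordinate, `μ (Aᵀ(c - Ax*))ᵢ` is a subgradient of `|·|`
at `x*ᵢ`. Sufficiency: `f x - f x*` is the sum of these subgradient inequalities plus
`(μ/2)‖A(x - x*)‖² ≥ 0`. Necessity: perturb a single coordinate; the remainder is quadratic in the
step, and convexity of `|·|` lets it be dropped. Finally `s` is a subgradient of `|·|` at `x` iff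
`|s| ≤ 1` and `s x = |x|`, which is exactly the fixed-point equation `x = S_l(x + l s)` for `l > 0`.
-/

open Matrix

noncomputable def softThresh (l w : ℝ) : ℝ := Real.sign w * max (|w| - l) 0

noncomputable def softThreshV {ι : Type*} (l : ℝ) (w : ι → ℝ) : ι → ℝ :=
  fun i => softThresh l (w i)

noncomputable def l1norm {ι : Type*} [Fintype ι] (x : ι → ℝ) : ℝ := ∑ i, |x i|

noncomputable def l2norm {ι : Type*} [Fintype ι] (x : ι → ℝ) : ℝ :=
  Real.sqrt (∑ i, (x i)^2)

noncomputable def ip {ι : Type*} [Fintype ι] (u v : ι → ℝ) : ℝ := ∑ i, u i * v i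

open Set Filter Topology

lemma ConvexOn.le_of_forall_le_add_sq {φ : ℝ → ℝ} (hφ : ConvexOn ℝ univ φ) {x s C : ℝ}
    (h : ∀ t, φ x + s * t ≤ φ (x + t) + C * t ^ 2) (z : ℝ) : φ x + s * (z - x) ≤ φ z := by
  have key : ∀ a ∈ Ioo (0 : ℝ) 1, φ x + s * (z - x) - φ z ≤ C * (z - x) ^ 2 * a := by
    rintro a ⟨ha0, ha1⟩
    have hconv := hφ.2 (mem_univ x) (mem_univ z) (sub_nonneg.2 ha1.le) ha0.le (by ring)
    rw [show (1 - a) • x + a • z = x + a * (z - x) by simp only [smul_eq_mul]; ring] at hconv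
    simp only [smul_eq_mul] at hconv
    have hloc := h (a * (z - x))
    have : a * (φ x + s * (z - x) - φ z) ≤ a * (C * (z - x) ^ 2 * a) := by nlinarith
    exact le_of_mul_le_mul_left this ha0
  have hlim : Tendsto (fun a => C * (z - x) ^ 2 * a) (𝓝[>] 0) (𝓝 0) :=
    ((continuous_const_mul _).tendsto' 0 0 (mul_zero _)).mono_left nhdsWithin_le_nhds
  linarith [ge_of_tendsto hlim (eventually_of_mem (Ioo_mem_nhdsGT zero_lt_one) key)]

lemma convexOn_univ_abs : ConvexOn ℝ univ (fun x : ℝ => |x|) :=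
  (convexOn_id convex_univ).sup (concaveOn_id convex_univ).neg

lemma abs_subgradient_iff {x s : ℝ} :
    (∀ z, |x| + s * (z - x) ≤ |z|) ↔ |s| ≤ 1 ∧ s * x = |x| := by
  constructor
  · intro h
    have h0 := h 0
    have h2 := h (2 * x)
    have hs := h s
    have hsx : s * x = |x| := by
      simp only [abs_zero] at h0
      rw [abs_mul, abs_two] at h2
      linarith
    exact ⟨by nlinarith [abs_mul_abs_self s, abs_nonneg s], hsx⟩
  · rintro ⟨hs, hsx⟩ z
    calc |x| + s * (z - x) = s * z := by linarith
      _ ≤ |s| * |z| := by rw [← abs_mul]; exact le_abs_self _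
      _ ≤ |z| := mul_le_of_le_one_left (abs_nonneg z) hs

section SoftThreshold

variable {l w : ℝ}

lemma softThresh_of_le (hl : 0 < l) (hw : l ≤ w) : softThresh l w = w - l := by
  rw [softThresh, Real.sign_of_pos (by linarith), abs_of_pos (by linarith),
    max_eq_left (by linarith), one_mul]

lemma softThresh_of_le_neg (hl : 0 < l) (hw : w ≤ -l) : softThresh l w = w + l := by
  rw [softThresh, Real.sign_of_neg (by linarith), abs_of_neg (by linarith),
    max_eq_left (by linarith)]
  ring

lemma softThresh_of_abs_le (hw : |w| ≤ l) : softThresh l w = 0 := by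
  rw [softThresh, max_eq_right (by linarith), mul_zero]

lemma eq_softThresh_iff {x s : ℝ} (hl : 0 < l) :
    x = softThresh l (x + l * s) ↔ |s| ≤ 1 ∧ s * x = |x| := by
  constructor
  · intro hx
    rcases le_or_gt l (x + l * s) with hw | hw
    · rw [softThresh_of_le hl hw] at hx
      obtain rfl : s = 1 := by nlinarith
      simp [abs_of_nonneg (show 0 ≤ x by linarith)]
    rcases le_or_gt (x + l * s) (-l) with hw' | hw'
    · rw [softThresh_of_le_neg hl hw'] at hx
      obtain rfl : s = -1 := by nlinarith
      simp [abs_of_nonpos (show x ≤ 0 by linarith)]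
    · rw [softThresh_of_abs_le (abs_le.2 ⟨hw'.le, hw.le⟩)] at hx
      subst hx
      refine ⟨abs_le.2 ⟨?_, ?_⟩, by simp⟩ <;> nlinarith
  · rintro ⟨hs, hsx⟩
    rcases lt_trichotomy x 0 with hx | rfl | hx
    · obtain rfl : s = -1 := by
        rw [abs_of_neg hx] at hsx
        nlinarith
      rw [softThresh_of_le_neg hl (by linarith)]
      ring
    · have hw : |0 + l * s| ≤ l := by
        rw [zero_add, abs_mul, abs_of_pos hl]
        exact mul_le_of_le_one_right hl.le hs
      rw [softThresh_of_abs_le hw]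
    · obtain rfl : s = 1 := by
        rw [abs_of_pos hx] at hsx
        nlinarith
      rw [softThresh_of_le hl (by linarith)]
      ring

end SoftThreshold

lemma l2norm_sq {ι : Type*} [Fintype ι] (v : ι → ℝ) : l2norm v ^ 2 = v ⬝ᵥ v := by
  rw [l2norm, Real.sq_sqrt (Finset.sum_nonneg fun _ _ => sq_nonneg _)]
  simp only [dotProduct, sq]

section Lasso

variable {m ι : Type*} [Fintype m] [Fintype ι] (A : Matrix m ι ℝ) (c : m → ℝ)

noncomputable def lassoObjective (μ : ℝ) (x : ι → ℝ) : ℝ :=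
  l1norm x + μ / 2 * l2norm (A *ᵥ x - c) ^ 2

lemma l2norm_mulVec_sub_sq (x y : ι → ℝ) :
    l2norm (A *ᵥ y - c) ^ 2 = l2norm (A *ᵥ x - c) ^ 2
      - 2 * ((Aᵀ *ᵥ (c - A *ᵥ x)) ⬝ᵥ (y - x)) + l2norm (A *ᵥ (y - x)) ^ 2 := by
  have hy : A *ᵥ y - c = (A *ᵥ x - c) + A *ᵥ (y - x) := by rw [mulVec_sub]; abel
  have hcross : (Aᵀ *ᵥ (c - A *ᵥ x)) ⬝ᵥ (y - x) = -((A *ᵥ x - c) ⬝ᵥ A *ᵥ (y - x)) := by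
    rw [dotProduct_mulVec, mulVec_transpose, ← neg_sub, neg_vecMul, neg_dotProduct]
  simp only [l2norm_sq, hy, hcross, add_dotProduct, dotProduct_add,
    dotProduct_comm (A *ᵥ (y - x))]
  ring

lemma lassoObjective_sub (μ : ℝ) (x y : ι → ℝ) :
    lassoObjective A c μ y - lassoObjective A c μ x
      = ∑ i, (|y i| - |x i| - μ * (Aᵀ *ᵥ (c - A *ᵥ x)) i * (y i - x i))
        + μ / 2 * l2norm (A *ᵥ (y - x)) ^ 2 := by
  have hlin : ∑ i, (|y i| - |x i| - μ * (Aᵀ *ᵥ (c - A *ᵥ x)) i * (y i - x i))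
      = l1norm y - l1norm x - μ * ((Aᵀ *ᵥ (c - A *ᵥ x)) ⬝ᵥ (y - x)) := by
    simp only [l1norm, dotProduct, Finset.sum_sub_distrib, Finset.mul_sum, Pi.sub_apply,
      mul_assoc]
  rw [hlin, lassoObjective, lassoObjective, l2norm_mulVec_sub_sq A c x y]
  ring

lemma lassoObjective_le_of_subgradient {μ : ℝ} (hμ : 0 ≤ μ) {x : ι → ℝ}
    (h : ∀ i z, |x i| + μ * (Aᵀ *ᵥ (c - A *ᵥ x)) i * (z - x i) ≤ |z|) (y : ι → ℝ) :
    lassoObjective A c μ x ≤ lassoObjective A c μ y := by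
  have hsum : 0 ≤ ∑ i, (|y i| - |x i| - μ * (Aᵀ *ᵥ (c - A *ᵥ x)) i * (y i - x i)) :=
    Finset.sum_nonneg fun i _ => by linarith [h i (y i)]
  have hquad : 0 ≤ μ / 2 * l2norm (A *ᵥ (y - x)) ^ 2 := by positivity
  linarith [lassoObjective_sub A c μ x y]

lemma subgradient_of_forall_lassoObjective_le {μ : ℝ} {x : ι → ℝ}
    (h : ∀ y, lassoObjective A c μ x ≤ lassoObjective A c μ y) (i : ι) (z : ℝ) :
    |x i| + μ * (Aᵀ *ᵥ (c - A *ᵥ x)) i * (z - x i) ≤ |z| := by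
  classical
  refine convexOn_univ_abs.le_of_forall_le_add_sq (C := μ / 2 * l2norm (A.col i) ^ 2)
    (fun t => ?_) z
  have hmin := sub_nonneg.2 (h (x + Pi.single i t))
  rw [lassoObjective_sub, add_sub_cancel_left, Finset.sum_eq_single i] at hmin
  · simp only [Pi.add_apply, Pi.single_eq_same, add_sub_cancel_left, mulVec_single, l2norm_sq,
      op_smul_eq_smul, smul_dotProduct, dotProduct_smul, smul_eq_mul] at hmin
    rw [l2norm_sq]
    linarith
  · intro j _ hj
    simp [Pi.single_eq_of_ne hj]
  · simp

lemma forall_lassoObjective_le_iff {μ : ℝ} (hμ : 0 ≤ μ) {x : ι → ℝ} :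
    (∀ y, lassoObjective A c μ x ≤ lassoObjective A c μ y) ↔
      ∀ i z, |x i| + μ * (Aᵀ *ᵥ (c - A *ᵥ x)) i * (z - x i) ≤ |z| :=
  ⟨subgradient_of_forall_lassoObjective_le A c, lassoObjective_le_of_subgradient A c hμ⟩

end Lasso

theorem minimizer_iff_fixed_point_general {n N : ℕ} (A : Matrix (Fin n) (Fin N) ℝ)
    (c : Fin n → ℝ) (μ : ℝ) (hμ : 0 < μ) (xs : Fin N → ℝ) :
    (∀ x : Fin N → ℝ,
        l1norm xs + (μ/2) * (l2norm (A.mulVec xs - c))^2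
          ≤ l1norm x + (μ/2) * (l2norm (A.mulVec x - c))^2) ↔
      xs = softThreshV μ⁻¹ (xs + Aᵀ.mulVec (c - A.mulVec xs)) := by
  have hstep : ∀ i, (xs + Aᵀ *ᵥ (c - A *ᵥ xs)) i
      = xs i + μ⁻¹ * (μ * (Aᵀ *ᵥ (c - A *ᵥ xs)) i) := fun i => by
    rw [inv_mul_cancel_left₀ hμ.ne']
    rfl
  change (∀ x, lassoObjective A c μ xs ≤ lassoObjective A c μ x) ↔ _
  rw [forall_lassoObjective_le_iff A c hμ.le, funext_iff]
  simp only [softThreshV, hstep, eq_softThresh_iff (inv_pos.2 hμ), abs_subgradient_iff]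

/-- For `f(x) = ‖x‖₁ + (μ/2)‖Ax - c‖₂²` with `AAᵀ = I`, `x*` minimizes `f` iff
`x* = S_{1/μ}(x* + Aᵀ(c - Ax*))`. -/
theorem minimizer_iff_fixed_point {n N : ℕ} (A : Matrix (Fin n) (Fin N) ℝ)
    (hA : A * Aᵀ = 1) (c : Fin n → ℝ) (μ : ℝ) (hμ : 0 < μ) (xs : Fin N → ℝ) :
    (∀ x : Fin N → ℝ,
        l1norm xs + (μ/2) * (l2norm (A.mulVec xs - c))^2
          ≤ l1norm x + (μ/2) * (l2norm (A.mulVec x - c))^2) ↔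
      xs = softThreshV μ⁻¹ (xs + Aᵀ.mulVec (c - A.mulVec xs)) :=
  minimizer_iff_fixed_point_general A c μ hμ xs
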